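/- Let A ∈ M₃. Then A has infinitely many Lorentz eigenvalues (i.e., σ_L(A) is an infinite set) if and only if A = [cI₂ 0; vᵀ a] for some c, a ∈ ℝ and nonzero v ∈ ℝ² with c < a + ‖v‖. Moreover, in that case the closed interval [max{c, (a+c−‖v‖)/2}, (a+c+‖v‖)/2] is contained in σ_bd(A). -/

import Mathlib

open Matrix
open Polynomial

noncomputable section

/-- Euclidean norm of a vector in `ℝ^n`. -/
def enorm {n : ℕ} (x : Fin n → ℝ) : ℝ := Real.sqrt (∑ i, x i ^ 2)

/-- The Lorentz cone in `ℝ^(n+1)`: vectors `(ξ, η)` with `‖ξ‖ ≤ η`. -/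
def lorentzCone (n : ℕ) : Set (Fin (n + 1) → ℝ) :=
  {x | _root_.enorm (fun i : Fin n => x i.castSucc) ≤ x (Fin.last n)}

/-- `x` is a Lorentz eigenvector of `A` associated with the Lorentz eigenvalue `l`. -/
def IsLEigenvector {n : ℕ} (A : Matrix (Fin (n + 1)) (Fin (n + 1)) ℝ) (l : ℝ)
    (x : Fin (n + 1) → ℝ) : Prop :=
  x ≠ 0 ∧ x ∈ lorentzCone n ∧ (A - l • 1) *ᵥ x ∈ lorentzCone n ∧
    x ⬝ᵥ ((A - l • 1) *ᵥ x) = 0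

/-- The Lorentz spectrum of `A`. -/
def sigmaL {n : ℕ} (A : Matrix (Fin (n + 1)) (Fin (n + 1)) ℝ) : Set ℝ :=
  {l | ∃ x, IsLEigenvector A l x}

/-- The interior Lorentz spectrum of `A`. -/
def sigmaInt {n : ℕ} (A : Matrix (Fin (n + 1)) (Fin (n + 1)) ℝ) : Set ℝ :=
  {l | ∃ x, IsLEigenvector A l x ∧
    _root_.enorm (fun i : Fin n => x i.castSucc) < x (Fin.last n)}

/-- The boundary Lorentz spectrum of `A`. -/
def sigmaBd {n : ℕ} (A : Matrix (Fin (n + 1)) (Fin (n + 1)) ℝ) : Set ℝ :=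
  {l | ∃ x, IsLEigenvector A l x ∧
    _root_.enorm (fun i : Fin n => x i.castSucc) = x (Fin.last n)}

/-- The block matrix `[X u; vᵀ a]` in `M₃`. -/
def blk (X : Matrix (Fin 2) (Fin 2) ℝ) (u v : Fin 2 → ℝ) (a : ℝ) :
    Matrix (Fin 3) (Fin 3) ℝ :=
  Matrix.of (Fin.snoc (fun i : Fin 2 => Fin.snoc (X i) (u i)) (Fin.snoc v a))

lemma enorm2 (x : Fin 2 → ℝ) : _root_.enorm x = Real.sqrt (x 0 ^ 2 + x 1 ^ 2) := by
  simp [_root_.enorm.eq_1, Fin.sum_univ_two]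

lemma mem_cone_iff (x : Fin 3 → ℝ) :
    x ∈ lorentzCone 2 ↔ 0 ≤ x 2 ∧ x 0 ^ 2 + x 1 ^ 2 ≤ x 2 ^ 2 := by
  have h0 : (Fin.castSucc (0 : Fin 2)) = (0 : Fin 3) := rfl
  have h1 : (Fin.castSucc (1 : Fin 2)) = (1 : Fin 3) := rfl
  have hl : (Fin.last 2) = (2 : Fin 3) := rfl
  rw [lorentzCone, Set.mem_setOf_eq, enorm2]
  simp only [h0, h1, hl]
  constructor
  · intro h
    have hs : (0:ℝ) ≤ Real.sqrt (x 0 ^ 2 + x 1 ^ 2) := Real.sqrt_nonneg _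
    have h2 : 0 ≤ x 2 := le_trans hs h
    refine ⟨h2, ?_⟩
    have := Real.sq_sqrt (by positivity : (0:ℝ) ≤ x 0 ^ 2 + x 1 ^ 2)
    nlinarith [Real.sqrt_nonneg (x 0 ^ 2 + x 1 ^ 2)]
  · rintro ⟨h2, h⟩
    calc Real.sqrt (x 0 ^ 2 + x 1 ^ 2) ≤ Real.sqrt (x 2 ^ 2) := Real.sqrt_le_sqrt h
    _ = x 2 := by rw [Real.sqrt_sq h2]

lemma blk_apply (X : Matrix (Fin 2) (Fin 2) ℝ) (u v : Fin 2 → ℝ) (a : ℝ) :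
    blk X u v a = !![X 0 0, X 0 1, u 0; X 1 0, X 1 1, u 1; v 0, v 1, a] := by
  ext i j
  fin_cases i <;> fin_cases j <;> simp [blk, Fin.snoc] <;> rfl

lemma resolv_apply (A : Matrix (Fin 3) (Fin 3) ℝ) (l : ℝ) (x : Fin 3 → ℝ) (i : Fin 3) :
    ((A - l • 1) *ᵥ x) i = A i 0 * x 0 + A i 1 * x 1 + A i 2 * x 2 - l * x i := by
  fin_cases i <;>
    simp [sub_mulVec, smul_mulVec, one_mulVec, mulVec, dotProduct, Fin.sum_univ_three,
      one_apply] <;> ring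

lemma dot3 (x y : Fin 3 → ℝ) : x ⬝ᵥ y = x 0 * y 0 + x 1 * y 1 + x 2 * y 2 := by
  simp [dotProduct, Fin.sum_univ_three]

lemma enorm_x (x : Fin 3 → ℝ) :
    _root_.enorm (fun i : Fin 2 => x i.castSucc) = Real.sqrt (x 0 ^ 2 + x 1 ^ 2) := by
  rw [enorm2]; rfl

lemma bd_orth {ξ0 ξ1 η y0 y1 y2 : ℝ} (hξ : ξ0^2 + ξ1^2 = η^2) (hη : 0 < η)
    (hy : y0^2 + y1^2 ≤ y2^2) (hy2 : 0 ≤ y2) (horth : ξ0*y0 + ξ1*y1 + η*y2 = 0) :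
    η * y0 = -y2 * ξ0 ∧ η * y1 = -y2 * ξ1 := by
  have hL : (ξ0*y0+ξ1*y1)^2 + (ξ0*y1-ξ1*y0)^2 = (ξ0^2+ξ1^2)*(y0^2+y1^2) := by ring
  have he : ξ0*y0+ξ1*y1 = -(η*y2) := by linarith
  have he2 : (ξ0*y0+ξ1*y1)^2 = η^2*y2^2 := by rw [he]; ring
  rw [he2, hξ] at hL
  have hdsq : (ξ0*y1-ξ1*y0)^2 ≤ 0 := by
    nlinarith [mul_le_mul_of_nonneg_left hy (sq_nonneg η)]
  have hd : ξ0*y1 - ξ1*y0 = 0 := by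
    have h' := sq_nonneg (ξ0*y1-ξ1*y0)
    have : (ξ0*y1-ξ1*y0)^2 = 0 := le_antisymm hdsq h'
    exact pow_eq_zero_iff (by norm_num : 2 ≠ 0) |>.mp this
  constructor
  · have h1 : η^2 * y0 = -(η*y2) * ξ0 := by
      linear_combination (-y0) * hξ + ξ0 * horth - ξ1 * hd
    exact mul_left_cancel₀ (ne_of_gt hη) (by linarith [h1] : η * (η * y0) = η * (-y2 * ξ0))
  · have h1 : η^2 * y1 = -(η*y2) * ξ1 := by
      linear_combination (-y1) * hξ + ξ1 * horth + ξ0 * hd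
    exact mul_left_cancel₀ (ne_of_gt hη) (by linarith [h1] : η * (η * y1) = η * (-y2 * ξ1))

lemma bd_struct {A : Matrix (Fin 3) (Fin 3) ℝ} {l : ℝ} (hl : l ∈ sigmaBd A) :
    ∃ ξ0 ξ1 μ : ℝ, ξ0^2 + ξ1^2 = 1 ∧ 0 ≤ μ ∧
      A 0 0 * ξ0 + A 0 1 * ξ1 + A 0 2 = (l - μ) * ξ0 ∧
      A 1 0 * ξ0 + A 1 1 * ξ1 + A 1 2 = (l - μ) * ξ1 ∧
      A 2 0 * ξ0 + A 2 1 * ξ1 + A 2 2 - l = μ := by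
  obtain ⟨x, ⟨hx0, _, hyC, hortho⟩, hbd⟩ := hl
  rw [enorm_x] at hbd
  have hlast : x (Fin.last 2) = x 2 := rfl
  rw [hlast] at hbd
  have hη0 : 0 ≤ x 2 := hbd ▸ Real.sqrt_nonneg _
  have hsq : x 0 ^ 2 + x 1 ^ 2 = x 2 ^ 2 := by
    have := Real.sq_sqrt (by positivity : (0:ℝ) ≤ x 0 ^ 2 + x 1 ^ 2)
    rw [hbd] at this; linarith
  have hη : 0 < x 2 := by
    rcases lt_or_eq_of_le hη0 with h | h
    · exact h
    · exfalso; apply hx0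
      have h0 : x 0 = 0 ∧ x 1 = 0 := by constructor <;> nlinarith
      funext i; fin_cases i
      · exact h0.1
      · exact h0.2
      · exact h.symm
  set y := (A - l • 1) *ᵥ x with hy
  rw [mem_cone_iff] at hyC
  rw [dot3] at hortho
  obtain ⟨h1, h2⟩ := bd_orth hsq hη hyC.2 hyC.1 (by linarith [hortho])
  refine ⟨x 0 / x 2, x 1 / x 2, y 2 / x 2, ?_, div_nonneg hyC.1 (le_of_lt hη), ?_, ?_, ?_⟩
  · field_simp; linarith
  · have e0 : y 0 = A 0 0 * x 0 + A 0 1 * x 1 + A 0 2 * x 2 - l * x 0 := resolv_apply A l x 0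
    field_simp
    nlinarith [h1, e0]
  · have e1 : y 1 = A 1 0 * x 0 + A 1 1 * x 1 + A 1 2 * x 2 - l * x 1 := resolv_apply A l x 1
    field_simp
    nlinarith [h2, e1]
  · have e2 : y 2 = A 2 0 * x 0 + A 2 1 * x 1 + A 2 2 * x 2 - l * x 2 := resolv_apply A l x 2
    field_simp
    nlinarith [e2]

lemma int_zero {x0 x1 x2 y0 y1 y2 : ℝ} (hx : x0^2 + x1^2 < x2^2) (hx2 : 0 ≤ x2)
    (hy : y0^2 + y1^2 ≤ y2^2) (hy2 : 0 ≤ y2) (horth : x0*y0 + x1*y1 + x2*y2 = 0) :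
    y0 = 0 ∧ y1 = 0 ∧ y2 = 0 := by
  have h2 : y2 = 0 := by
    by_contra h
    have hy2' : 0 < y2 := lt_of_le_of_ne hy2 (Ne.symm h)
    have he : x0*y0+x1*y1 = -(x2*y2) := by linarith
    have he2 : (x0*y0+x1*y1)^2 = x2^2*y2^2 := by rw [he]; ring
    have key : x2^2*y2^2 ≤ (x0^2+x1^2)*(y0^2+y1^2) := by
      nlinarith [sq_nonneg (x0*y1 - x1*y0)]
    have k2 : (x0^2+x1^2)*(y0^2+y1^2) ≤ (x0^2+x1^2)*y2^2 :=
      mul_le_mul_of_nonneg_left hy (by positivity)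
    have k3 : (x0^2+x1^2)*y2^2 < x2^2*y2^2 :=
      mul_lt_mul_of_pos_right hx (pow_pos hy2' 2)
    linarith
  subst h2
  have h0 : y0 = 0 := by nlinarith
  have h1 : y1 = 0 := by nlinarith
  exact ⟨h0, h1, rfl⟩

lemma sigmaInt_finite (A : Matrix (Fin 3) (Fin 3) ℝ) : (sigmaInt A).Finite := by
  apply (A.finite_spectrum).subset
  rintro l ⟨x, ⟨hx0, hxC, hyC, hortho⟩, hint⟩
  rw [enorm_x] at hint
  have hlast : x (Fin.last 2) = x 2 := rfl
  rw [hlast] at hint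
  have hη0 : 0 ≤ x 2 := le_trans (Real.sqrt_nonneg _) (le_of_lt hint)
  have hsq : x 0 ^ 2 + x 1 ^ 2 < x 2 ^ 2 := by
    have := Real.sq_sqrt (by positivity : (0:ℝ) ≤ x 0 ^ 2 + x 1 ^ 2)
    nlinarith [Real.sqrt_nonneg (x 0 ^ 2 + x 1 ^ 2)]
  set y := (A - l • 1) *ᵥ x with hy
  rw [mem_cone_iff] at hyC
  rw [dot3] at hortho
  obtain ⟨h0, h1, h2⟩ := int_zero hsq hη0 hyC.2 hyC.1 hortho
  have hker : (A - l • 1) *ᵥ x = 0 := by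
    funext i; fin_cases i
    · exact h0
    · exact h1
    · exact h2
  rw [spectrum.mem_iff]
  intro hunit
  have hdet : ((l • 1 : Matrix (Fin 3) (Fin 3) ℝ) - A).det = 0 := by
    rw [← Matrix.exists_mulVec_eq_zero_iff]
    refine ⟨x, hx0, ?_⟩
    have hneg : (l • (1 : Matrix (Fin 3) (Fin 3) ℝ) - A) = -(A - l • 1) := (neg_sub _ _).symm
    rw [hneg, Matrix.neg_mulVec, hker, neg_zero]
  rw [Algebra.algebraMap_eq_smul_one] at hunit
  have := (Matrix.isUnit_iff_isUnit_det _).mp hunit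
  rw [hdet] at this
  exact (not_isUnit_zero this)

lemma struct_of_bd_infinite {A : Matrix (Fin 3) (Fin 3) ℝ} (h : (sigmaBd A).Infinite) :
    A 0 1 = 0 ∧ A 1 0 = 0 ∧ A 1 1 = A 0 0 ∧ A 0 2 = 0 ∧ A 1 2 = 0 := by
  set S : Set (ℝ×ℝ) := {p | p.1^2 + p.2^2 = 1 ∧
    p.2*(A 0 0*p.1 + A 0 1*p.2 + A 0 2) - p.1*(A 1 0*p.1 + A 1 1*p.2 + A 1 2) = 0} with hSdef
  have hsub : sigmaBd A ⊆ (fun p : ℝ×ℝ => (A 0 0*p.1^2 + (A 0 1 + A 1 0)*p.1*p.2 + A 1 1*p.2^2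
      + (A 0 2 + A 2 0)*p.1 + (A 1 2 + A 2 1)*p.2 + A 2 2)/2) '' S := by
    intro l hl
    obtain ⟨ξ0, ξ1, μ, hunit, hμ, e1, e2, e3⟩ := bd_struct hl
    refine ⟨(ξ0, ξ1), ⟨?_, ?_⟩, ?_⟩
    · exact hunit
    · linear_combination ξ1 * e1 - ξ0 * e2
    · show (_ : ℝ) = l
      field_simp
      linear_combination ξ0 * e1 + ξ1 * e2 + e3 + (l-μ) * hunit
  have hSinf : S.Infinite := fun hS => (h.mono hsub) (hS.image _)
  have hT : (Prod.fst '' S).Infinite := by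
    intro hTfin
    apply hSinf
    apply Set.Finite.subset (Set.Finite.biUnion hTfin
      (fun t _ => (Set.finite_singleton ((t, -Real.sqrt (1-t^2)) : ℝ×ℝ)).insert (t, Real.sqrt (1-t^2))))
    intro p hp
    have h1 : p.1^2 + p.2^2 = 1 := hp.1
    have hnn : (0:ℝ) ≤ 1 - p.1^2 := by nlinarith [sq_nonneg p.2]
    have hs := Real.sq_sqrt hnn
    have h2 : (p.2 - Real.sqrt (1-p.1^2)) * (p.2 + Real.sqrt (1-p.1^2)) = 0 := by
      linear_combination h1 - hs
    simp only [Set.mem_iUnion]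
    refine ⟨p.1, ⟨p, hp, rfl⟩, ?_⟩
    rcases mul_eq_zero.mp h2 with h' | h'
    · left
      have : p.2 = Real.sqrt (1-p.1^2) := by linarith
      exact Prod.ext rfl this
    · right
      have : p.2 = -Real.sqrt (1-p.1^2) := by linarith
      simp only [Set.mem_singleton_iff]
      exact Prod.ext rfl this
  set α := A 0 0 - A 1 1 with hα
  set β := A 0 2 with hβ
  set pp := A 0 1 + A 1 0 with hpp
  set qq := A 1 2 with hqq
  set rr := -A 0 1 with hrr
  have hQ : ∀ t ∈ Prod.fst '' S, (pp*t^2+qq*t+rr)^2 - (1-t^2)*(α*t+β)^2 = 0 := by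
    rintro t ⟨p, hp, rfl⟩
    have h1 : p.1^2 + p.2^2 = 1 := hp.1
    have h2 := hp.2
    have h3 : p.2*(α*p.1+β) = pp*p.1^2 + qq*p.1 + rr := by
      linear_combination h2 - A 0 1 * h1
    have h4 : p.2^2 = 1 - p.1^2 := by linarith
    linear_combination (-(p.2*(α*p.1+β) + (pp*p.1^2+qq*p.1+rr))) * h3 + (α*p.1+β)^2 * h4
  set P : Polynomial ℝ := (C pp * X^2 + C qq * X + C rr)^2 - (1 - X^2)*(C α * X + C β)^2 with hPdef
  have hP0 : P = 0 := by
    apply Polynomial.eq_zero_of_infinite_isRoot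
    apply hT.mono
    intro t ht
    show P.IsRoot t
    have := hQ t ht
    simp only [hPdef, Polynomial.IsRoot, Polynomial.eval_sub, Polynomial.eval_pow,
      Polynomial.eval_mul, Polynomial.eval_add, Polynomial.eval_C, Polynomial.eval_X,
      Polynomial.eval_one]
    linear_combination this
  have heval : ∀ t : ℝ, (pp*t^2+qq*t+rr)^2 - (1-t^2)*(α*t+β)^2 = 0 := by
    intro t
    have := congrArg (Polynomial.eval t) hP0
    simp only [hPdef, Polynomial.eval_sub, Polynomial.eval_pow, Polynomial.eval_mul,
      Polynomial.eval_add, Polynomial.eval_C, Polynomial.eval_X, Polynomial.eval_one,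
      Polynomial.eval_zero] at this
    linear_combination this
  have s1 : (pp+qq+rr)^2 = 0 := by linear_combination heval 1
  have s2 : (pp-qq+rr)^2 = 0 := by linear_combination heval (-1)
  have s0 : rr^2 - β^2 = 0 := by linear_combination heval 0
  have s3 : (4*pp+2*qq+rr)^2 + 3*(2*α+β)^2 = 0 := by linear_combination heval 2
  have t1 : pp+qq+rr = 0 := (pow_eq_zero_iff two_ne_zero).mp s1
  have t2 : pp-qq+rr = 0 := (pow_eq_zero_iff two_ne_zero).mp s2
  have k3 : (4*pp+2*qq+rr)^2 = 0 := by
    linarith [sq_nonneg (4*pp+2*qq+rr), sq_nonneg (2*α+β)]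
  have k4 : (2*α+β)^2 = 0 := by
    linarith [sq_nonneg (4*pp+2*qq+rr), sq_nonneg (2*α+β)]
  have t3 : 4*pp+2*qq+rr = 0 := (pow_eq_zero_iff two_ne_zero).mp k3
  have t4 : 2*α+β = 0 := (pow_eq_zero_iff two_ne_zero).mp k4
  have hppz : pp = 0 := by linarith
  have hrrz : rr = 0 := by linarith
  have kβ : β^2 = 0 := by nlinarith [s0]
  have hβz : β = 0 := (pow_eq_zero_iff two_ne_zero).mp kβ
  have hαz : α = 0 := by linarith
  refine ⟨by linarith [hrrz, hrr], ?_, by linarith [hαz, hα], hβz, by linarith [t1, t2]⟩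
  have : A 0 1 = 0 := by linarith [hrrz]
  linarith [hppz]


lemma enorm_pair (v : Fin 2 → ℝ) : _root_.enorm v = Real.sqrt (v 0 ^ 2 + v 1 ^ 2) := enorm2 v

lemma bd_subset_Icc {A : Matrix (Fin 3) (Fin 3) ℝ}
    (h01 : A 0 1 = 0) (h10 : A 1 0 = 0) (h11 : A 1 1 = A 0 0) (h02 : A 0 2 = 0)
    (h12 : A 1 2 = 0) :
    sigmaBd A ⊆ Set.Icc (max (A 0 0) ((A 2 2 + A 0 0 - Real.sqrt ((A 2 0)^2 + (A 2 1)^2)) / 2))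
      ((A 2 2 + A 0 0 + Real.sqrt ((A 2 0)^2 + (A 2 1)^2)) / 2) := by
  intro l hl
  obtain ⟨ξ0, ξ1, μ, hunit, hμ, e1, e2, e3⟩ := bd_struct hl
  rw [h01, h02] at e1
  rw [h10, h11, h12] at e2
  set c := A 0 0 with hc
  set nv := Real.sqrt ((A 2 0)^2 + (A 2 1)^2) with hnv
  have hnv0 : 0 ≤ nv := Real.sqrt_nonneg _
  have hnvsq : nv^2 = (A 2 0)^2 + (A 2 1)^2 := Real.sq_sqrt (by positivity)
  have hd : (c - (l - μ)) = 0 := by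
    have h01' : (c - (l - μ)) * ξ0 = 0 := by linear_combination e1
    have h02' : (c - (l - μ)) * ξ1 = 0 := by linear_combination e2
    have hsq : (c - (l - μ))^2 = 0 := by
      linear_combination ((c - (l - μ)) * ξ0) * h01' + ((c - (l - μ)) * ξ1) * h02'
        - (c - (l - μ))^2 * hunit
    exact (pow_eq_zero_iff two_ne_zero).mp hsq
  have hlc : l - μ = c := by linarith
  have hlgec : c ≤ l := by linarith
  have hs : A 2 0 * ξ0 + A 2 1 * ξ1 = 2*l - A 2 2 - c := by linarith
  have hcs : (2*l - A 2 2 - c)^2 ≤ nv^2 := by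
    rw [hnvsq]
    have lag : (A 2 0*ξ0+A 2 1*ξ1)^2 + (A 2 0*ξ1 - A 2 1*ξ0)^2
        = ((A 2 0)^2+(A 2 1)^2)*(ξ0^2+ξ1^2) := by ring
    rw [hunit, mul_one, hs] at lag
    linarith [sq_nonneg (A 2 0*ξ1 - A 2 1*ξ0)]
  have hub : 2*l - A 2 2 - c ≤ nv := by nlinarith
  have hlb : -nv ≤ 2*l - A 2 2 - c := by nlinarith
  exact ⟨max_le hlgec (by linarith), by linarith⟩


lemma entries_blk (c a : ℝ) (v : Fin 2 → ℝ) :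
    blk (c • 1) 0 v a = !![c, 0, 0; 0, c, 0; v 0, v 1, a] := by
  rw [blk_apply]
  congr 1 <;> simp [Matrix.smul_apply, Matrix.one_apply]

lemma icc_subset_bd (c a : ℝ) (v : Fin 2 → ℝ) (hv : v ≠ 0) (hca : c < a + _root_.enorm v) :
    Set.Icc (max c ((a + c - _root_.enorm v) / 2)) ((a + c + _root_.enorm v) / 2)
      ⊆ sigmaBd (blk (c • 1) 0 v a) := by
  intro l hl
  obtain ⟨nv, hnv⟩ : ∃ t : ℝ, t = _root_.enorm v := ⟨_, rfl⟩
  rw [← hnv] at hl hca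
  have hnvsq : nv^2 = v 0 ^2 + v 1 ^2 := by
    rw [hnv, enorm_pair]; exact Real.sq_sqrt (by positivity)
  have hvne : v 0 ≠ 0 ∨ v 1 ≠ 0 := by
    by_contra hcon
    push_neg at hcon
    exact hv (funext fun i => by fin_cases i <;> simp [hcon.1, hcon.2])
  have hsumpos : 0 < v 0 ^2 + v 1 ^2 := by
    rcases hvne with h | h
    · have := sq_nonneg (v 1); positivity
    · have := sq_nonneg (v 0); positivity
  have hnvpos : 0 < nv := by
    rw [hnv, enorm_pair]; exact Real.sqrt_pos.mpr hsumpos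
  obtain ⟨hlo, hhi⟩ := hl
  have hgec : c ≤ l := le_trans (le_max_left _ _) hlo
  have hgelo : (a + c - nv)/2 ≤ l := le_trans (le_max_right _ _) hlo
  obtain ⟨s, hs⟩ : ∃ t : ℝ, t = 2*l - a - c := ⟨_, rfl⟩
  have hsle : s ≤ nv := by rw [hs]; linarith
  have hsge : -nv ≤ s := by rw [hs]; linarith
  have hsub : (0:ℝ) ≤ nv^2 - s^2 := by nlinarith
  obtain ⟨r, hr, hr2⟩ : ∃ t : ℝ, t = Real.sqrt (nv^2 - s^2) ∧ t^2 = nv^2 - s^2 :=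
    ⟨_, rfl, Real.sq_sqrt hsub⟩
  have hnv2ne : nv^2 ≠ 0 := by positivity
  obtain ⟨ξ0, hξ0⟩ : ∃ t : ℝ, t = (s * v 0 - r * v 1)/nv^2 := ⟨_, rfl⟩
  obtain ⟨ξ1, hξ1⟩ : ∃ t : ℝ, t = (s * v 1 + r * v 0)/nv^2 := ⟨_, rfl⟩
  have hunit : ξ0^2 + ξ1^2 = 1 := by
    rw [hξ0, hξ1]
    field_simp
    linear_combination (v 0^2 + v 1^2) * hr2 - nv^2 * hnvsq
  have hdot : v 0 * ξ0 + v 1 * ξ1 = s := by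
    rw [hξ0, hξ1]
    field_simp
    linear_combination (-s) * hnvsq
  have hA := entries_blk c a v
  have hx0 : (![ξ0, ξ1, 1] : Fin 3 → ℝ) 0 = ξ0 := rfl
  have hx1 : (![ξ0, ξ1, 1] : Fin 3 → ℝ) 1 = ξ1 := rfl
  have hx2 : (![ξ0, ξ1, 1] : Fin 3 → ℝ) 2 = 1 := rfl
  have hy0 : ((blk (c • 1) 0 v a - l • 1) *ᵥ ![ξ0, ξ1, 1]) 0 = (c - l) * ξ0 := by
    rw [resolv_apply, hA, hx0, hx1, hx2]
    norm_num [Matrix.cons_val_zero, Matrix.cons_val_one, Matrix.cons_val_two, Matrix.vecHead, Matrix.vecTail]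
    ring
  have hy1 : ((blk (c • 1) 0 v a - l • 1) *ᵥ ![ξ0, ξ1, 1]) 1 = (c - l) * ξ1 := by
    rw [resolv_apply, hA, hx0, hx1, hx2]
    norm_num [Matrix.cons_val_zero, Matrix.cons_val_one, Matrix.cons_val_two, Matrix.vecHead, Matrix.vecTail]
    ring
  have hy2 : ((blk (c • 1) 0 v a - l • 1) *ᵥ ![ξ0, ξ1, 1]) 2 = l - c := by
    rw [resolv_apply, hA, hx0, hx1, hx2]
    norm_num [Matrix.cons_val_zero, Matrix.cons_val_one, Matrix.cons_val_two, Matrix.vecHead, Matrix.vecTail]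
    linear_combination hdot + hs
  refine ⟨![ξ0, ξ1, 1], ⟨?_, ?_, ?_, ?_⟩, ?_⟩
  · intro hzero
    have := congrFun hzero 2
    rw [hx2] at this
    simp at this
  · rw [mem_cone_iff, hx0, hx1, hx2, hunit]
    norm_num
  · rw [mem_cone_iff, hy0, hy1, hy2]
    refine ⟨by linarith, ?_⟩
    apply le_of_eq
    linear_combination (c-l)^2 * hunit
  · rw [dot3, hy0, hy1, hy2, hx0, hx1, hx2]
    linear_combination (c-l) * hunit
  · rw [enorm_x]
    have hxl : (![ξ0, ξ1, 1] : Fin 3 → ℝ) (Fin.last 2) = (1:ℝ) := rfl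
    rw [hx0, hx1, hunit, hxl]
    exact Real.sqrt_one

lemma sigma_split {A : Matrix (Fin 3) (Fin 3) ℝ} :
    sigmaL A ⊆ sigmaInt A ∪ sigmaBd A := by
  rintro l ⟨x, hx⟩
  have hc := hx.2.1
  rw [lorentzCone, Set.mem_setOf_eq] at hc
  rcases lt_or_eq_of_le hc with h | h
  · exact Or.inl ⟨x, hx, h⟩
  · exact Or.inr ⟨x, hx, h⟩

theorem infinite_L_spectrum_iff (A : Matrix (Fin 3) (Fin 3) ℝ) :
    ((sigmaL A).Infinite ↔
      ∃ (c a : ℝ) (v : Fin 2 → ℝ), v ≠ 0 ∧ c < a + _root_.enorm v ∧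
        A = blk (c • 1) 0 v a) ∧
    (∀ (c a : ℝ) (v : Fin 2 → ℝ), v ≠ 0 → c < a + _root_.enorm v →
      A = blk (c • 1) 0 v a →
        Set.Icc (max c ((a + c - _root_.enorm v) / 2)) ((a + c + _root_.enorm v) / 2) ⊆ sigmaBd A) := by
  have part2 : ∀ (c a : ℝ) (v : Fin 2 → ℝ), v ≠ 0 → c < a + _root_.enorm v →
      A = blk (c • 1) 0 v a →
        Set.Icc (max c ((a + c - _root_.enorm v) / 2)) ((a + c + _root_.enorm v) / 2) ⊆ sigmaBd A := by
    intro c a v hv hca hA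
    rw [hA]
    exact icc_subset_bd c a v hv hca
  refine ⟨⟨?_, ?_⟩, part2⟩
  · -- forward direction
    intro hinf
    have hbd : (sigmaBd A).Infinite := by
      intro hfin
      exact (hinf.mono sigma_split) ((sigmaInt_finite A).union hfin)
    obtain ⟨h01, h10, h11, h02, h12⟩ := struct_of_bd_infinite hbd
    set nv := Real.sqrt ((A 2 0)^2 + (A 2 1)^2) with hnvdef
    have hIcc := bd_subset_Icc h01 h10 h11 h02 h12
    have hlt : max (A 0 0) ((A 2 2 + A 0 0 - nv) / 2) < (A 2 2 + A 0 0 + nv) / 2 := by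
      by_contra hcon
      push_neg at hcon
      apply hbd
      apply Set.Finite.subset (Set.finite_singleton ((A 2 2 + A 0 0 + nv) / 2))
      intro l hl
      obtain ⟨h1, h2⟩ := hIcc hl
      have : l = (A 2 2 + A 0 0 + nv) / 2 := le_antisymm h2 (le_trans hcon h1)
      exact this
    have hnvpos : 0 < nv := by
      have := lt_of_le_of_lt (le_max_right _ _) hlt
      linarith
    have hca : A 0 0 < A 2 2 + nv := by
      have := lt_of_le_of_lt (le_max_left _ _) hlt
      linarith
    refine ⟨A 0 0, A 2 2, ![A 2 0, A 2 1], ?_, ?_, ?_⟩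
    · intro hzero
      have h0 := congrFun hzero 0
      have h1 := congrFun hzero 1
      simp at h0 h1
      rw [hnvdef, h0, h1] at hnvpos
      simp at hnvpos
    · have : _root_.enorm ![A 2 0, A 2 1] = nv := by
        rw [enorm_pair, hnvdef]; norm_num
      rw [this]; linarith
    · rw [entries_blk]
      ext i j
      fin_cases i <;> fin_cases j <;>
        simp [h01, h10, h11, h02, h12]
  · -- backward direction
    rintro ⟨c, a, v, hv, hca, hA⟩
    have hnvpos : 0 < _root_.enorm v := by
      rw [enorm_pair]
      apply Real.sqrt_pos.mpr
      by_contra hcon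
      push_neg at hcon
      have h0 : v 0 = 0 ∧ v 1 = 0 := by
        constructor <;> nlinarith [sq_nonneg (v 0), sq_nonneg (v 1)]
      exact hv (funext fun i => by fin_cases i <;> simp [h0.1, h0.2])
    have hlt : max c ((a + c - _root_.enorm v) / 2) < (a + c + _root_.enorm v) / 2 := by
      rw [max_lt_iff]
      constructor <;> linarith
    have hIccInf : (Set.Icc (max c ((a + c - _root_.enorm v) / 2)) ((a + c + _root_.enorm v) / 2)).Infinite :=
      Set.infinite_coe_iff.mp (Set.Icc.infinite hlt)
    apply Set.Infinite.mono _ hIccInf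
    intro l hl
    exact ⟨_, (part2 c a v hv hca hA hl).choose_spec.1⟩
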